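/- Let 𝐭 be any infinite sequence over A. Then the infinite Stewart word T(𝐭) has critical exponent 3, and this exponent is not attained: every nonempty finite factor w of T(𝐭) satisfies exp(w) < 3, while for every real ε > 0 there exists a nonempty finite factor w of T(𝐭) with exp(w) > 3 − ε. -/

import Mathlib

/-- The alphabet B = {0, 1, ?}. -/
inductive B : Type
  | b0 : B
  | b1 : B
  | bq : B
deriving DecidableEq, Inhabited, Repr

/-- The six Stewart patterns a = 01?, b = 10?, c = 0?1, d = 1?0, e = ?01, f = ?10. -/
inductive A : Type
  | a : A
  | b : A
  | c : A
  | d : A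
  | e : A
  | f : A
deriving DecidableEq, Inhabited, Repr

open B in
/-- The length-3 word over B associated with a Stewart pattern. -/
def pat : A → List B
  | .a => [b0, b1, bq]
  | .b => [b1, b0, bq]
  | .c => [b0, bq, b1]
  | .d => [b1, bq, b0]
  | .e => [bq, b0, b1]
  | .f => [bq, b1, b0]

/-- Replace the occurrences of `?` in the first word, in order,
by the symbols of the second word. -/
def fill : List B → List B → List B
  | [], _ => []
  | B.bq :: rest, s :: ss => s :: fill rest ss
  | B.bq :: rest, [] => B.bq :: fill rest []
  | x :: rest, ss => x :: fill rest ss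

/-- Helper: the finite Stewart word of the *reverse* of `t`. -/
def Trev : List A → List B
  | [] => [B.bq]
  | g :: t => fill (Trev t ++ Trev t ++ Trev t) (pat g)

/-- The finite Stewart word `T(t)`, of length `3 ^ t.length`:
`T(ε) = ?`, and `T(t g)` is obtained from `T(t)T(t)T(t)` by replacing its
three occurrences of `?`, in order, by the three symbols of the pattern `g`. -/
def stewT (t : List A) : List B := Trev t.reverse

/-- The length-`r` prefix of an infinite sequence of Stewart patterns, as a list. -/
def prefT (t : ℕ → A) (r : ℕ) : List A := List.ofFn (fun i : Fin r => t i)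

/-- The infinite Stewart word `T(𝐭)`: its symbol at position `n` is the eventual
value of `T(t_0 ⋯ t_{r-1})[n]` as `r → ∞`. -/
noncomputable def stewInf (t : ℕ → A) (n : ℕ) : B :=
  Classical.epsilon (fun v : B => ∃ R : ℕ, ∀ r ≥ R, (stewT (prefT t r)).getD n B.bq = v)

/-- `w` occurs as a factor of the infinite word `x`. -/
def FactorOf (w : List B) (x : ℕ → B) : Prop :=
  ∃ i : ℕ, ∀ j : ℕ, j < w.length → w.getD j B.bq = x (i + j)

/-- `w` has period `p ≥ 1`: `w[i] = w[i+p]` for all `0 ≤ i < |w| - p`. -/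
def HasPeriod (w : List B) (p : ℕ) : Prop :=
  1 ≤ p ∧ ∀ i : ℕ, i + p < w.length → w.getD i B.bq = w.getD (i + p) B.bq

/-- The least period `per(w)` of a word. -/
noncomputable def leastPeriod (w : List B) : ℕ := sInf {p | HasPeriod w p}

/-- The exponent `exp(w) = |w| / per(w)` of a word. -/
noncomputable def expo (w : List B) : ℝ := (w.length : ℝ) / (leastPeriod w : ℝ)

/-- The Hamming distance between two Stewart patterns: the number of positions
`p ∈ {0,1,2}` at which the length-3 words differ. -/
def ham (g h : A) : ℕ :=
  (Finset.univ.filter fun p : Fin 3 => (pat g).getD p B.bq ≠ (pat h).getD p B.bq).card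

/-- `t` is ultimately periodic. -/
def UltPeriodic (t : ℕ → A) : Prop :=
  ∃ N : ℕ, ∃ p : ℕ, 1 ≤ p ∧ ∀ n ≥ N, t (n + p) = t n

/-- An infinite word `x` is 3-automatic: there is a finite automaton with output,
reading base-3 representations least-significant-digit first (trailing zeros
allowed), computing `x`. -/
def IsThreeAutomatic (x : ℕ → B) : Prop :=
  ∃ (Q : Type) (_ : Finite Q) (δ : Q → Fin 3 → Q) (q0 : Q) (τ : Q → B),
    ∀ (r : ℕ) (e : Fin r → Fin 3),
      τ (List.foldl δ q0 (List.ofFn fun i => e i)) =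
        x (∑ i : Fin r, (e i).val * 3 ^ (i : ℕ))
/-! ### Basic pattern facts -/

def qp : A → ℕ | .a => 2 | .b => 2 | .c => 1 | .d => 1 | .e => 0 | .f => 0
def zp : A → ℕ | .a => 0 | .b => 1 | .c => 0 | .d => 2 | .e => 1 | .f => 2
def opp : A → ℕ | .a => 1 | .b => 0 | .c => 2 | .d => 0 | .e => 2 | .f => 1

lemma qp_lt (g : A) : qp g < 3 := by cases g <;> decide
lemma zp_lt (g : A) : zp g < 3 := by cases g <;> decide
lemma opp_lt (g : A) : opp g < 3 := by cases g <;> decide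
lemma pat_qp (g : A) : (pat g).getD (qp g) B.bq = B.bq := by cases g <;> rfl
lemma pat_zp (g : A) : (pat g).getD (zp g) B.bq = B.b0 := by cases g <;> rfl
lemma pat_opp (g : A) : (pat g).getD (opp g) B.bq = B.b1 := by cases g <;> rfl
lemma zp_ne_qp (g : A) : zp g ≠ qp g := by cases g <;> decide
lemma opp_ne_qp (g : A) : opp g ≠ qp g := by cases g <;> decide

/-! ### Digits -/

def digit (k n : ℕ) : ℕ := n / 3^k % 3

lemma digit_lt (k n : ℕ) : digit k n < 3 := Nat.mod_lt _ (by norm_num)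

lemma digit_zero (n : ℕ) : digit 0 n = n % 3 := by simp [digit]

lemma digit_succ (k n : ℕ) : digit (k+1) n = digit k (n / 3) := by
  simp [digit, Nat.div_div_eq_div_mul, pow_succ, mul_comm]

lemma digit_succ' (k m j : ℕ) (hj : j < 3) : digit (k+1) (3*m + j) = digit k m := by
  rw [digit_succ]
  congr 1
  omega

lemma digit_mod (k r n : ℕ) (hk : k < r) : digit k (n % 3^r) = digit k n := by
  have h3 : (3:ℕ)^r = 3^k * 3^(r-k) := by rw [← pow_add]; congr 1; omega
  have h1 : n % 3^r / 3^k = n / 3^k % 3^(r-k) := by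
    rw [h3, Nat.mod_mul_right_div_self]
  have hd : (3:ℕ) ∣ 3^(r-k) := dvd_pow_self 3 (by omega)
  simp only [digit, h1, Nat.mod_mod_of_dvd _ hd]

lemma digit_add_pow (k r n : ℕ) (hk : k < r) : digit k (n + 3^r) = digit k n := by
  have h3 : (3:ℕ)^r = 3^(r-k) * 3^k := by rw [← pow_add]; congr 1; omega
  have h1 : (n + 3^r) / 3^k = n / 3^k + 3^(r-k) := by
    rw [h3, Nat.add_mul_div_right _ _ (by positivity : (0:ℕ) < 3^k)]
  have hd : (3:ℕ)^(r-k) % 3 = 0 := by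
    have : (3:ℕ) ∣ 3^(r-k) := dvd_pow_self 3 (by omega)
    omega
  simp only [digit, h1]
  omega

lemma digit_ext : ∀ r m m', m < 3^r → m' < 3^r →
    (∀ k, k < r → digit k m = digit k m') → m = m' := by
  intro r
  induction r with
  | zero => intro m m' hm hm' _; simp at hm hm'; omega
  | succ r ih =>
    intro m m' hm hm' h
    have h0 := h 0 (by omega)
    rw [digit_zero, digit_zero] at h0
    have hdiv : m / 3 = m' / 3 := by
      apply ih
      · have : (3:ℕ)^(r+1) = 3 * 3^r := by ring
        omega
      · have : (3:ℕ)^(r+1) = 3 * 3^r := by ring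
        omega
      · intro k hk
        rw [← digit_succ, ← digit_succ]
        exact h (k+1) (by omega)
    omega
/-! ### The limit word V -/

open Classical in
noncomputable def V (t : ℕ → A) (n : ℕ) : B :=
  if h : ∃ k, digit k n ≠ qp (t k) then
    (pat (t (Nat.find h))).getD (digit (Nat.find h) n) B.bq
  else B.bq

lemma Vdet (t : ℕ → A) (n k₀ : ℕ) (hne : digit k₀ n ≠ qp (t k₀))
    (hmin : ∀ j, j < k₀ → digit j n = qp (t j)) :
    V t n = (pat (t k₀)).getD (digit k₀ n) B.bq := by
  have h : ∃ k, digit k n ≠ qp (t k) := ⟨k₀, hne⟩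
  have hf : Nat.find h = k₀ := by
    rw [Nat.find_eq_iff]
    exact ⟨hne, fun j hj => not_not_intro (hmin j hj)⟩
  rw [V, dif_pos h, hf]

lemma V_bq (t : ℕ → A) (n : ℕ) (h : ∀ k, digit k n = qp (t k)) : V t n = B.bq := by
  rw [V, dif_neg]
  push_neg
  exact h

lemma V_mod (t : ℕ → A) (n : ℕ) (h : n % 3 ≠ qp (t 0)) :
    V t n = (pat (t 0)).getD (n % 3) B.bq := by
  have := Vdet t n 0 (by rwa [digit_zero]) (by omega)
  rwa [digit_zero] at this

lemma V_shift (t : ℕ → A) (m : ℕ) :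
    V t (3*m + qp (t 0)) = V (fun k => t (k+1)) m := by
  have hq := qp_lt (t 0)
  by_cases h : ∃ k, digit k m ≠ qp (t (k+1))
  · obtain ⟨k, hk⟩ := h
    have hA : ∃ k, digit k m ≠ qp (t (k+1)) := ⟨k, hk⟩
    set k₀ := Nat.find hA with hk₀
    have hspec : digit k₀ m ≠ qp (t (k₀+1)) := Nat.find_spec hA
    have hmin : ∀ j, j < k₀ → digit j m = qp (t (j+1)) := by
      intro j hj
      have := Nat.find_min hA hj
      tauto
    have h1 : V (fun k => t (k+1)) m = (pat (t (k₀+1))).getD (digit k₀ m) B.bq :=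
      Vdet _ m k₀ hspec hmin
    have h2 : V t (3*m + qp (t 0)) = (pat (t (k₀+1))).getD (digit (k₀+1) (3*m + qp (t 0))) B.bq := by
      apply Vdet t _ (k₀+1)
      · rwa [digit_succ' _ _ _ hq]
      · intro j hj
        cases j with
        | zero => rw [digit_zero]; omega
        | succ j' => rw [digit_succ' _ _ _ hq]; exact hmin j' (by omega)
    rw [h1, h2, digit_succ' _ _ _ hq]
  · push_neg at h
    rw [V_bq _ _ (by intro k; cases k with
        | zero => rw [digit_zero]; omega
        | succ k' => rw [digit_succ' _ _ _ hq]; exact h k'),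
      V_bq _ _ h]

/-! ### The ?-position Pr -/

def Pr (t : ℕ → A) (r : ℕ) : ℕ := ∑ k ∈ Finset.range r, qp (t k) * 3^k

lemma Pr_zero (t : ℕ → A) : Pr t 0 = 0 := by simp [Pr]

lemma Pr_succ (t : ℕ → A) (r : ℕ) : Pr t (r+1) = Pr t r + qp (t r) * 3^r := by
  simp [Pr, Finset.sum_range_succ]

lemma Pr_succ' (t : ℕ → A) (r : ℕ) :
    Pr t (r+1) = qp (t 0) + 3 * Pr (fun k => t (k+1)) r := by
  rw [Pr, Finset.sum_range_succ']
  simp only [Pr, Finset.mul_sum]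
  rw [add_comm]
  congr 1
  · simp
  · apply Finset.sum_congr rfl
    intro k _
    ring

lemma Pr_lt (t : ℕ → A) (r : ℕ) : Pr t r < 3^r := by
  induction r with
  | zero => simp [Pr]
  | succ r ih =>
    rw [Pr_succ]
    have := qp_lt (t r)
    have h3 : (3:ℕ)^(r+1) = 3 * 3^r := by ring
    nlinarith

lemma digit_Pr (t : ℕ → A) : ∀ r k, k < r → digit k (Pr t r) = qp (t k) := by
  intro r
  induction r generalizing t with
  | zero => omega
  | succ r ih =>
    intro k hk
    rw [Pr_succ']
    cases k with
    | zero =>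
      rw [digit_zero]
      have := qp_lt (t 0)
      omega
    | succ k' =>
      have hq := qp_lt (t 0)
      have : qp (t 0) + 3 * Pr (fun k => t (k+1)) r = 3 * Pr (fun k => t (k+1)) r + qp (t 0) := by ring
      rw [this, digit_succ' _ _ _ hq]
      exact ih (fun k => t (k+1)) k' (by omega)

lemma n_mod_ne (t : ℕ → A) (r n : ℕ) (h : n % 3^r ≠ Pr t r) :
    ∃ k, k < r ∧ digit k n ≠ qp (t k) := by
  by_contra hc
  push_neg at hc
  apply h
  apply digit_ext r _ _ (Nat.mod_lt _ (by positivity)) (Pr_lt t r)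
  intro k hk
  rw [digit_mod _ _ _ hk, digit_Pr t r k hk]
  exact hc k hk

lemma V_good (t : ℕ → A) (r n : ℕ) (h : ∃ k, k < r ∧ digit k n ≠ qp (t k)) :
    V t n = V t (n + 3^r) := by
  obtain ⟨k, hkr, hk⟩ := h
  have hA : ∃ k, digit k n ≠ qp (t k) := ⟨k, hk⟩
  set k₀ := Nat.find hA with hk₀def
  have hk₀r : k₀ < r := lt_of_le_of_lt (Nat.find_min' hA hk) hkr
  have hspec : digit k₀ n ≠ qp (t k₀) := Nat.find_spec hA
  have hmin : ∀ j, j < k₀ → digit j n = qp (t j) := by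
    intro j hj
    have := Nat.find_min hA hj
    tauto
  rw [Vdet t n k₀ hspec hmin,
    Vdet t (n + 3^r) k₀ (by rwa [digit_add_pow _ _ _ hk₀r])
      (fun j hj => by rw [digit_add_pow _ _ _ (by omega)]; exact hmin j hj),
    digit_add_pow _ _ _ hk₀r]

lemma V_iter : ∀ (r : ℕ) (t : ℕ → A) (m : ℕ),
    V t (Pr t r + m * 3^r) = V (fun k => t (k + r)) m := by
  intro r
  induction r with
  | zero =>
    intro t m
    simp [Pr_zero]
  | succ r ih =>
    intro t m
    have harr : Pr t (r+1) + m * 3^(r+1) =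
        3 * (Pr (fun k => t (k+1)) r + m * 3^r) + qp (t 0) := by
      rw [Pr_succ']
      ring
    rw [harr, V_shift, ih (fun k => t (k+1)) m]
    rfl
/-! ### fill lemmas -/

lemma fill_cons_b0 (l : List B) (s : List B) : fill (B.b0 :: l) s = B.b0 :: fill l s := by
  cases s <;> rfl

lemma fill_cons_b1 (l : List B) (s : List B) : fill (B.b1 :: l) s = B.b1 :: fill l s := by
  cases s <;> rfl

lemma fill_cons_bq (l : List B) (c : B) (cs : List B) :
    fill (B.bq :: l) (c :: cs) = c :: fill l cs := rfl

lemma fill_append_free (W : List B) (hW : B.bq ∉ W) (l s : List B) :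
    fill (W ++ l) s = W ++ fill l s := by
  induction W with
  | nil => rfl
  | cons x xs ih =>
    have hx : x ≠ B.bq := by intro h; subst h; simp at hW
    have hxs : B.bq ∉ xs := by intro h; apply hW; simp [h]
    cases x with
    | b0 => rw [List.cons_append, fill_cons_b0, ih hxs, List.cons_append]
    | b1 => rw [List.cons_append, fill_cons_b1, ih hxs, List.cons_append]
    | bq => exact absurd rfl hx

lemma fill_nil_right (W : List B) (hW : B.bq ∉ W) : fill W [] = W := by
  have h := fill_append_free W hW [] []
  simp only [List.append_nil] at h
  rw [h]
  show W ++ fill [] [] = W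
  simp [fill]

lemma fill3 (W₁ W₂ : List B) (h1 : B.bq ∉ W₁) (h2 : B.bq ∉ W₂) (c0 c1 c2 : B) :
    fill ((W₁ ++ B.bq :: W₂) ++ (W₁ ++ B.bq :: W₂) ++ (W₁ ++ B.bq :: W₂)) [c0, c1, c2]
      = (W₁ ++ c0 :: W₂) ++ (W₁ ++ c1 :: W₂) ++ (W₁ ++ c2 :: W₂) := by
  have assoc : ∀ (X : List B), (W₁ ++ B.bq :: W₂) ++ X = W₁ ++ B.bq :: (W₂ ++ X) := by
    intro X; simp
  calc fill ((W₁ ++ B.bq :: W₂) ++ (W₁ ++ B.bq :: W₂) ++ (W₁ ++ B.bq :: W₂)) [c0, c1, c2]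
      = fill (W₁ ++ B.bq :: (W₂ ++ ((W₁ ++ B.bq :: W₂) ++ (W₁ ++ B.bq :: W₂)))) [c0, c1, c2] := by
        rw [List.append_assoc, List.append_assoc]; simp
    _ = W₁ ++ c0 :: fill (W₂ ++ ((W₁ ++ B.bq :: W₂) ++ (W₁ ++ B.bq :: W₂))) [c1, c2] := by
        rw [fill_append_free _ h1, fill_cons_bq]
    _ = W₁ ++ c0 :: (W₂ ++ fill ((W₁ ++ B.bq :: W₂) ++ (W₁ ++ B.bq :: W₂)) [c1, c2]) := by
        rw [fill_append_free _ h2]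
    _ = W₁ ++ c0 :: (W₂ ++ fill (W₁ ++ B.bq :: (W₂ ++ (W₁ ++ B.bq :: W₂))) [c1, c2]) := by
        rw [List.append_assoc]; simp
    _ = W₁ ++ c0 :: (W₂ ++ (W₁ ++ c1 :: fill (W₂ ++ (W₁ ++ B.bq :: W₂)) [c2])) := by
        rw [fill_append_free _ h1, fill_cons_bq]
    _ = W₁ ++ c0 :: (W₂ ++ (W₁ ++ c1 :: (W₂ ++ fill (W₁ ++ B.bq :: W₂) [c2]))) := by
        rw [fill_append_free _ h2]
    _ = W₁ ++ c0 :: (W₂ ++ (W₁ ++ c1 :: (W₂ ++ (W₁ ++ c2 :: fill W₂ [])))) := by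
        rw [fill_append_free _ h1, fill_cons_bq]
    _ = W₁ ++ c0 :: (W₂ ++ (W₁ ++ c1 :: (W₂ ++ (W₁ ++ c2 :: W₂)))) := by
        rw [fill_nil_right _ h2]
    _ = (W₁ ++ c0 :: W₂) ++ (W₁ ++ c1 :: W₂) ++ (W₁ ++ c2 :: W₂) := by
        simp

/-! ### prefT facts -/

lemma prefT_length (t : ℕ → A) (r : ℕ) : (prefT t r).length = r := by
  simp [prefT]

lemma prefT_rev_succ (t : ℕ → A) (r : ℕ) :
    (prefT t (r+1)).reverse = t r :: (prefT t r).reverse := by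
  have : prefT t (r+1) = prefT t r ++ [t r] := by
    rw [prefT, List.ofFn_succ']
    simp [prefT, List.concat_eq_append]
  rw [this]
  simp

lemma stewT_succ (t : ℕ → A) (r : ℕ) :
    stewT (prefT t (r+1)) =
      fill (stewT (prefT t r) ++ stewT (prefT t r) ++ stewT (prefT t r)) (pat (t r)) := by
  rw [stewT, prefT_rev_succ, Trev, stewT]
/-! ### getD helpers -/

lemma getD_mid (W₁ W₂ : List B) (c : B) :
    (W₁ ++ c :: W₂).getD W₁.length B.bq = c := by
  rw [List.getD_append_right _ _ _ _ (le_refl _)]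
  simp

lemma getD_ne_mid (W₁ W₂ : List B) (c c' : B) (j : ℕ) (hj : j ≠ W₁.length) :
    (W₁ ++ c :: W₂).getD j B.bq = (W₁ ++ c' :: W₂).getD j B.bq := by
  rcases lt_or_gt_of_ne hj with h | h
  · rw [List.getD_append _ _ _ _ h, List.getD_append _ _ _ _ h]
  · rw [List.getD_append_right _ _ _ _ (by omega), List.getD_append_right _ _ _ _ (by omega)]
    have : j - W₁.length = (j - W₁.length - 1) + 1 := by omega
    rw [this]
    simp [List.getD]

/-! ### Structure of finite Stewart words -/

lemma pat_eq (g : A) :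
    pat g = [(pat g).getD 0 B.bq, (pat g).getD 1 B.bq, (pat g).getD 2 B.bq] := by
  cases g <;> rfl

lemma TrevStruct (t : ℕ → A) : ∀ r : ℕ, ∃ W₁ W₂ : List B,
    stewT (prefT t r) = W₁ ++ B.bq :: W₂ ∧ B.bq ∉ W₁ ∧ B.bq ∉ W₂ ∧
    W₁.length = Pr t r ∧ W₁.length + 1 + W₂.length = 3^r := by
  intro r
  induction r with
  | zero =>
    refine ⟨[], [], ?_, by simp, by simp, by simp [Pr_zero], by simp⟩
    rfl
  | succ r ih =>
    obtain ⟨W₁, W₂, hS, h1, h2, hlen, htot⟩ := ih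
    have hfill := fill3 W₁ W₂ h1 h2
      ((pat (t r)).getD 0 B.bq) ((pat (t r)).getD 1 B.bq) ((pat (t r)).getD 2 B.bq)
    have hstep : stewT (prefT t (r+1)) =
        (W₁ ++ (pat (t r)).getD 0 B.bq :: W₂) ++ (W₁ ++ (pat (t r)).getD 1 B.bq :: W₂)
          ++ (W₁ ++ (pat (t r)).getD 2 B.bq :: W₂) := by
      rw [stewT_succ, hS, ← hfill]
      congr 1
      exact pat_eq (t r)
    have hPr : Pr t (r+1) = Pr t r + qp (t r) * 3^r := Pr_succ t r
    -- case on which position of pat (t r) is the ?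
    have hqval := pat_qp (t r)
    have hzval := pat_zp (t r)
    have hoval := pat_opp (t r)
    have hznq := zp_ne_qp (t r)
    have honq := opp_ne_qp (t r)
    have hqlt := qp_lt (t r)
    -- values at non-? positions are not bq
    have hnbq : ∀ j, j < 3 → j ≠ qp (t r) → (pat (t r)).getD j B.bq ≠ B.bq := by
      have hzlt := zp_lt (t r)
      have holt := opp_lt (t r)
      have hzo : zp (t r) ≠ opp (t r) := by
        intro h; rw [h, hoval] at hzval; exact B.noConfusion hzval
      intro j hj hjq
      have : j = zp (t r) ∨ j = opp (t r) := by
        rcases (by omega : j = 0 ∨ j = 1 ∨ j = 2) with h | h | h <;> subst h <;> omega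
      rcases this with h | h <;> subst h
      · rw [hzval]; exact fun h => B.noConfusion h
      · rw [hoval]; exact fun h => B.noConfusion h
    set c0 := (pat (t r)).getD 0 B.bq with hc0
    set c1 := (pat (t r)).getD 1 B.bq with hc1
    set c2 := (pat (t r)).getD 2 B.bq with hc2
    have hmem : ∀ (c : B), c ≠ B.bq → B.bq ∉ W₁ ++ c :: W₂ := by
      intro c hc hmemc
      rcases List.mem_append.mp hmemc with h | h
      · exact h1 h
      · rcases List.mem_cons.mp h with h | h
        · exact hc h.symm
        · exact h2 h
    rcases (by omega : qp (t r) = 0 ∨ qp (t r) = 1 ∨ qp (t r) = 2) with hq | hq | hq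
    · -- ? at position 0 : W₁' = W₁,  W₂' = W₂ ++ blocks 1,2
      have hc0q : c0 = B.bq := by rw [hc0, ← hq]; exact hqval
      refine ⟨W₁, W₂ ++ ((W₁ ++ c1 :: W₂) ++ (W₁ ++ c2 :: W₂)), ?_, h1, ?_, ?_, ?_⟩
      · rw [hstep, hc0q]; simp
      · intro hmemc
        rcases List.mem_append.mp hmemc with h | h
        · exact h2 h
        · rcases List.mem_append.mp h with h | h
          · exact hmem c1 (hnbq 1 (by omega) (by omega)) h
          · exact hmem c2 (hnbq 2 (by omega) (by omega)) h
      · rw [hlen, hPr, hq]; ring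
      · simp only [List.length_append, List.length_cons]
        have h3 : (3:ℕ)^(r+1) = 3 * 3^r := by ring
        omega
    · -- ? at position 1 : W₁' = block0 ++ W₁
      have hc1q : c1 = B.bq := by rw [hc1, ← hq]; exact hqval
      refine ⟨(W₁ ++ c0 :: W₂) ++ W₁, W₂ ++ (W₁ ++ c2 :: W₂), ?_, ?_, ?_, ?_, ?_⟩
      · rw [hstep, hc1q]; simp
      · intro hmemc
        rcases List.mem_append.mp hmemc with h | h
        · exact hmem c0 (hnbq 0 (by omega) (by omega)) h
        · exact h1 h
      · intro hmemc
        rcases List.mem_append.mp hmemc with h | h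
        · exact h2 h
        · exact hmem c2 (hnbq 2 (by omega) (by omega)) h
      · simp only [List.length_append, List.length_cons]
        rw [hPr, hq]
        omega
      · simp only [List.length_append, List.length_cons]
        have h3 : (3:ℕ)^(r+1) = 3 * 3^r := by ring
        omega
    · -- ? at position 2
      have hc2q : c2 = B.bq := by rw [hc2, ← hq]; exact hqval
      refine ⟨(W₁ ++ c0 :: W₂) ++ (W₁ ++ c1 :: W₂) ++ W₁, W₂, ?_, ?_, h2, ?_, ?_⟩
      · rw [hstep, hc2q]; simp
      · intro hmemc
        rcases List.mem_append.mp hmemc with h | h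
        · rcases List.mem_append.mp h with h | h
          · exact hmem c0 (hnbq 0 (by omega) (by omega)) h
          · exact hmem c1 (hnbq 1 (by omega) (by omega)) h
        · exact h1 h
      · simp only [List.length_append, List.length_cons]
        rw [hPr, hq]
        omega
      · simp only [List.length_append, List.length_cons]
        have h3 : (3:ℕ)^(r+1) = 3 * 3^r := by ring
        omega
/-! ### Truncated limit word and the finite getD formula -/

open Classical in
noncomputable def Vr (t : ℕ → A) (r n : ℕ) : B :=
  if h : ∃ k, digit k n ≠ qp (t k) then
    (if Nat.find h < r then (pat (t (Nat.find h))).getD (digit (Nat.find h) n) B.bq else B.bq)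
  else B.bq

lemma VrDet (t : ℕ → A) (r n k₀ : ℕ) (hk₀r : k₀ < r) (hne : digit k₀ n ≠ qp (t k₀))
    (hmin : ∀ j, j < k₀ → digit j n = qp (t j)) :
    Vr t r n = (pat (t k₀)).getD (digit k₀ n) B.bq := by
  have h : ∃ k, digit k n ≠ qp (t k) := ⟨k₀, hne⟩
  have hf : Nat.find h = k₀ := by
    rw [Nat.find_eq_iff]
    exact ⟨hne, fun j hj => not_not_intro (hmin j hj)⟩
  rw [Vr, dif_pos h, hf, if_pos hk₀r]

lemma VrBq (t : ℕ → A) (r n : ℕ) (h : ∀ k, k < r → digit k n = qp (t k)) :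
    Vr t r n = B.bq := by
  rw [Vr]
  split
  · rename_i hex
    rw [if_neg]
    intro hlt
    exact (Nat.find_spec hex) (h _ hlt)
  · rfl

lemma Vr_eq_V (t : ℕ → A) (r n : ℕ) (h : ∃ k, k < r ∧ digit k n ≠ qp (t k)) :
    Vr t r n = V t n := by
  obtain ⟨k, hkr, hk⟩ := h
  have hex : ∃ k, digit k n ≠ qp (t k) := ⟨k, hk⟩
  rw [Vr, V, dif_pos hex, dif_pos hex,
    if_pos (lt_of_le_of_lt (Nat.find_min' hex hk) hkr)]

lemma Vr_eq_V' (t : ℕ → A) (r n : ℕ) (h : ¬ ∃ k, digit k n ≠ qp (t k)) :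
    Vr t r n = V t n := by
  rw [Vr, V, dif_neg h, dif_neg h]

lemma stew_getD (t : ℕ → A) : ∀ r n, n < 3^r →
    (stewT (prefT t r)).getD n B.bq = Vr t r n := by
  intro r
  induction r with
  | zero =>
    intro n hn
    have hn0 : n = 0 := by simpa using hn
    subst hn0
    rw [VrBq t 0 0 (by omega)]
    rfl
  | succ r ih =>
    intro n hn
    obtain ⟨W₁, W₂, hS, h1, h2, hlen, htot⟩ := TrevStruct t r
    have hstep : stewT (prefT t (r+1)) =
        (W₁ ++ (pat (t r)).getD 0 B.bq :: W₂) ++ (W₁ ++ (pat (t r)).getD 1 B.bq :: W₂)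
          ++ (W₁ ++ (pat (t r)).getD 2 B.bq :: W₂) := by
      rw [stewT_succ, hS,
        ← fill3 W₁ W₂ h1 h2 ((pat (t r)).getD 0 B.bq) ((pat (t r)).getD 1 B.bq)
          ((pat (t r)).getD 2 B.bq)]
      congr 1
      exact pat_eq (t r)
    have hblen : ∀ c : B, (W₁ ++ c :: W₂).length = 3^r := by
      intro c; simp only [List.length_append, List.length_cons]; omega
    have h3 : (3:ℕ)^(r+1) = 3 * 3^r := by ring
    have hNpos : 0 < (3:ℕ)^r := by positivity
    set N := (3:ℕ)^r with hN
    -- block index and offset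
    set b := n / N with hb
    set j := n % N with hj
    have hjlt : j < N := Nat.mod_lt _ hNpos
    have hblt : b < 3 := by
      rw [hb, Nat.div_lt_iff_lt_mul hNpos]
      omega
    have key : n = N * b + j := by rw [hb, hj]; exact (Nat.div_add_mod n N).symm
    clear_value b j
    -- getD through the three blocks
    have hget : (stewT (prefT t (r+1))).getD n B.bq
        = (W₁ ++ (pat (t r)).getD b B.bq :: W₂).getD j B.bq := by
      rw [hstep]
      rcases (by omega : b = 0 ∨ b = 1 ∨ b = 2) with hb3 | hb3 | hb3
      · have key0 : n = j := by rw [hb3] at key; simpa using key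
        rw [hb3]
        rw [List.getD_append _ _ _ _ (by rw [List.length_append, hblen, hblen]; omega),
          List.getD_append _ _ _ _ (by rw [hblen]; omega), key0]
      · have key1 : n = N + j := by rw [hb3] at key; omega
        rw [hb3]
        rw [List.getD_append _ _ _ _ (by rw [List.length_append, hblen, hblen]; omega),
          List.getD_append_right _ _ _ _ (by rw [hblen]; omega)]
        congr 1
        rw [hblen]
        omega
      · have key2 : n = N + N + j := by rw [hb3] at key; omega
        rw [hb3]
        rw [List.getD_append_right _ _ _ _ (by rw [List.length_append, hblen, hblen]; omega)]
        congr 1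
        rw [List.length_append, hblen, hblen]
        omega
    rw [hget]
    by_cases hcase : j = Pr t r
    · -- all digits below r agree with qp
      have hdig : ∀ k, k < r → digit k n = qp (t k) := by
        intro k hk
        rw [← digit_mod k r n hk, ← hN, ← hj, hcase, digit_Pr t r k hk]
      have hdr : digit r n = b := by
        rw [digit, ← hN, ← hb]
        exact Nat.mod_eq_of_lt hblt
      have hjW : j = W₁.length := by rw [hcase, hlen]
      rw [hjW, getD_mid]
      by_cases hqr : b = qp (t r)
      · rw [hqr, pat_qp, VrBq]
        intro k hk
        rcases (by omega : k < r ∨ k = r) with h | h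
        · exact hdig k h
        · subst h; rw [hdr, hqr]
      · rw [VrDet t (r+1) n r (by omega) (by rw [hdr]; exact hqr) hdig, hdr]
    · -- some digit below r differs
      have hex : ∃ k, k < r ∧ digit k j ≠ qp (t k) := by
        apply n_mod_ne t r j
        rwa [Nat.mod_eq_of_lt (by rw [← hN]; exact hjlt)]
      obtain ⟨k, hkr, hk⟩ := hex
      have hA : ∃ k, digit k j ≠ qp (t k) := ⟨k, hk⟩
      set k₀ := Nat.find hA with hk₀def
      have hk₀r : k₀ < r := lt_of_le_of_lt (Nat.find_min' hA hk) hkr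
      have hspec : digit k₀ j ≠ qp (t k₀) := Nat.find_spec hA
      have hmin : ∀ i, i < k₀ → digit i j = qp (t i) := by
        intro i hi
        have := Nat.find_min hA hi
        tauto
      have hdjn : ∀ i, i < r → digit i j = digit i n := by
        intro i hi
        rw [hj, hN]
        exact digit_mod i r n hi
      have hval : (W₁ ++ (pat (t r)).getD b B.bq :: W₂).getD j B.bq
          = (stewT (prefT t r)).getD j B.bq := by
        rw [hS]
        apply getD_ne_mid
        rw [hlen]
        exact hcase
      rw [hval, ih j hjlt,
        VrDet t r j k₀ hk₀r hspec hmin,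
        VrDet t (r+1) n k₀ (by omega) (by rw [← hdjn k₀ hk₀r]; exact hspec)
          (fun i hi => by rw [← hdjn i (by omega)]; exact hmin i hi),
        hdjn k₀ hk₀r]

/-! ### stewInf = V -/

lemma ev (t : ℕ → A) (n : ℕ) :
    ∃ R : ℕ, ∀ r ≥ R, (stewT (prefT t r)).getD n B.bq = V t n := by
  classical
  have hn3 : ∀ r, n < r → n < 3^r := by
    intro r hr
    calc n < 3^n := Nat.lt_pow_self (by norm_num)
    _ ≤ 3^r := Nat.pow_le_pow_right (by norm_num) (by omega)
  by_cases h : ∃ k, digit k n ≠ qp (t k)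
  · refine ⟨max (n+1) (Nat.find h + 1), fun r hr => ?_⟩
    rw [stew_getD t r n (hn3 r (by omega))]
    have h2 : Nat.find h + 1 ≤ r := le_trans (le_max_right _ _) hr
    exact Vr_eq_V t r n ⟨Nat.find h, by omega, Nat.find_spec h⟩
  · refine ⟨n+1, fun r hr => ?_⟩
    rw [stew_getD t r n (hn3 r (by omega))]
    exact Vr_eq_V' t r n h

lemma stewInf_eq (t : ℕ → A) (n : ℕ) : stewInf t n = V t n := by
  obtain ⟨R, hR⟩ := ev t n
  have hex : ∃ v : B, ∃ R' : ℕ, ∀ r ≥ R', (stewT (prefT t r)).getD n B.bq = v :=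
    ⟨V t n, R, hR⟩
  have hspec := Classical.epsilon_spec hex
  obtain ⟨R', hR'⟩ := hspec
  unfold stewInf
  rw [← hR' (max R R') (le_max_right _ _)]
  exact hR (max R R') (le_max_left _ _)
/-! ### No cubes -/

lemma pat_pair : ∀ (g : A) (pm : ℕ), pm = 1 ∨ pm = 2 →
    ∃ α, α < 3 ∧ (pat g).getD α B.bq ≠ B.bq ∧
      (pat g).getD ((α + pm) % 3) B.bq ≠ B.bq ∧
      (pat g).getD α B.bq ≠ (pat g).getD ((α + pm) % 3) B.bq := by
  intro g pm h
  rcases h with h | h <;> subst h <;> cases g <;> decide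

lemma noCube : ∀ p, 1 ≤ p → ∀ (t : ℕ → A) (i : ℕ),
    ¬ (∀ k, k < 2*p → V t (i+k) = V t (i+k+p)) := by
  intro p
  induction p using Nat.strong_induction_on with
  | _ p IH =>
    intro hp t i h
    by_cases h3 : 3 ∣ p
    · -- reduce to p/3
      obtain ⟨p', rfl⟩ := h3
      have hp' : 1 ≤ p' := by omega
      set q := qp (t 0) with hqdef
      have hq : q < 3 := qp_lt (t 0)
      set m₀ := (i + 2 - q) / 3 with hm₀
      have hm₀1 : i ≤ 3 * m₀ + q := by omega
      have hm₀2 : 3 * m₀ + q < i + 3 := by omega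
      apply IH p' (by omega) hp' (fun k => t (k+1)) m₀
      intro k hk
      have hres := h (3 * (m₀ + k) + q - i) (by omega)
      have harr : i + (3 * (m₀ + k) + q - i) = 3 * (m₀ + k) + q := by omega
      rw [harr] at hres
      have harr2 : 3 * (m₀ + k) + q + 3 * p' = 3 * (m₀ + k + p') + q := by omega
      rw [harr2] at hres
      have e1 : V t (3 * (m₀ + k) + q) = V (fun k => t (k+1)) (m₀ + k) := by
        rw [hqdef]; exact V_shift t (m₀ + k)
      have e2 : V t (3 * (m₀ + k + p') + q) = V (fun k => t (k+1)) (m₀ + k + p') := by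
        rw [hqdef]; exact V_shift t (m₀ + k + p')
      rw [e1, e2] at hres
      exact hres
    · -- base case: p not divisible by 3
      have hp3 : p % 3 = 1 ∨ p % 3 = 2 := by omega
      obtain ⟨α, hα3, hα, hβ, hαβ⟩ := pat_pair (t 0) (p % 3) hp3
      set β := (α + p % 3) % 3 with hβdef
      have hβ3 : β < 3 := by omega
      have hαq : α ≠ qp (t 0) := fun hc => hα (hc ▸ pat_qp (t 0))
      have hβq : β ≠ qp (t 0) := fun hc => hβ (hc ▸ pat_qp (t 0))
      rcases (by omega : p = 1 ∨ 2 ≤ p) with hp1 | hp2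
      · -- p = 1 : three consecutive equal letters
        subst hp1
        have e0 : V t i = V t (i+1) := by
          have := h 0 (by omega)
          simpa using this
        have e1 : V t (i+1) = V t (i+2) := by
          have := h 1 (by omega)
          have harr : i+1+1 = i+2 := by omega
          rwa [harr] at this
        have hall : ∀ k, k < 3 → V t (i+k) = V t i := by
          intro k hk
          rcases (by omega : k = 0 ∨ k = 1 ∨ k = 2) with hk' | hk' | hk' <;> subst hk'
          · simp
          · exact e0.symm
          · exact (e0.trans e1).symm
        set kα := (α + 3 - i % 3) % 3 with hkα
        set kβ := (β + 3 - i % 3) % 3 with hkβ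
        have hvα : V t (i + kα) = (pat (t 0)).getD α B.bq := by
          have hmod : (i + kα) % 3 = α := by omega
          rw [V_mod t _ (by rw [hmod]; exact hαq), hmod]
        have hvβ : V t (i + kβ) = (pat (t 0)).getD β B.bq := by
          have hmod : (i + kβ) % 3 = β := by omega
          rw [V_mod t _ (by rw [hmod]; exact hβq), hmod]
        apply hαβ
        rw [← hvα, ← hvβ, hall kα (by omega), hall kβ (by omega)]
      · -- p ≥ 2 : direct clash
        set k := (α + 3 - i % 3) % 3 with hkdef
        have hklt : k < 2*p := by omega
        have hres := h k hklt
        have hmod1 : (i + k) % 3 = α := by omega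
        have hmod2 : (i + k + p) % 3 = β := by omega
        rw [V_mod t _ (by rw [hmod1]; exact hαq), hmod1,
          V_mod t _ (by rw [hmod2]; exact hβq), hmod2] at hres
        exact hαβ hres
/-! ### Adjacent equal letters -/

lemma V_z0 (s : ℕ → A) : V (fun k => s (k+1)) (3 + zp (s 1)) = B.b0 := by
  have hz := zp_lt (s 1)
  have hmod : (3 + zp (s 1)) % 3 = zp (s 1) := by omega
  rw [V_mod (fun k => s (k+1)) _
    (by show (3 + zp (s 1)) % 3 ≠ qp (s 1); rw [hmod]; exact zp_ne_qp (s 1)), hmod]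
  exact pat_zp (s 1)

lemma V_z1 (s : ℕ → A) : V (fun k => s (k+1)) (3 + opp (s 1)) = B.b1 := by
  have hz := opp_lt (s 1)
  have hmod : (3 + opp (s 1)) % 3 = opp (s 1) := by omega
  rw [V_mod (fun k => s (k+1)) _
    (by show (3 + opp (s 1)) % 3 ≠ qp (s 1); rw [hmod]; exact opp_ne_qp (s 1)), hmod]
  exact pat_opp (s 1)

lemma adj_q2 (s : ℕ → A) (hq : qp (s 0) = 2) (c : B) (m' : ℕ)
    (hz : V (fun k => s (k+1)) m' = c) (hpz : (pat (s 0)).getD 0 B.bq = c) :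
    V s (3*m'+2) = V s (3*m'+3) := by
  have e1 : V s (3*m'+2) = c := by
    rw [← hq, V_shift s m']
    exact hz
  have e2 : V s (3*m'+3) = c := by
    have hmod : (3*m'+3) % 3 = 0 := by omega
    rw [V_mod s _ (by rw [hmod]; omega), hmod, hpz]
  rw [e1, e2]

lemma adj_q1 (s : ℕ → A) (hq : qp (s 0) = 1) (c : B) (m' : ℕ)
    (hz : V (fun k => s (k+1)) m' = c) (hpz : (pat (s 0)).getD 0 B.bq = c) :
    V s (3*m') = V s (3*m'+1) := by
  have e1 : V s (3*m') = c := by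
    have hmod : (3*m') % 3 = 0 := by omega
    rw [V_mod s _ (by rw [hmod]; omega), hmod, hpz]
  have e2 : V s (3*m'+1) = c := by
    rw [← hq, V_shift s m']
    exact hz
  rw [e1, e2]

lemma adj_q0 (s : ℕ → A) (hq : qp (s 0) = 0) (c : B) (m' : ℕ) (hm' : 1 ≤ m')
    (hz : V (fun k => s (k+1)) m' = c) (hpz : (pat (s 0)).getD 2 B.bq = c) :
    V s (3*m'-1) = V s (3*m') := by
  have e1 : V s (3*m'-1) = c := by
    have hmod : (3*m'-1) % 3 = 2 := by omega
    rw [V_mod s _ (by rw [hmod]; omega), hmod, hpz]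
  have e2 : V s (3*m') = c := by
    have harr : 3*m' = 3*m' + qp (s 0) := by omega
    rw [harr, V_shift s m']
    exact hz
  rw [e1, e2]

lemma adjPair (s : ℕ → A) : ∃ m, 1 ≤ m ∧ V s m = V s (m+1) := by
  cases h0 : s 0 with
  | a =>
    refine ⟨3*(3 + zp (s 1))+2, by omega, ?_⟩
    have harr : 3*(3 + zp (s 1))+2+1 = 3*(3 + zp (s 1))+3 := by omega
    rw [harr]
    exact adj_q2 s (by rw [h0]; rfl) B.b0 _ (V_z0 s) (by rw [h0]; rfl)
  | b =>
    refine ⟨3*(3 + opp (s 1))+2, by omega, ?_⟩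
    have harr : 3*(3 + opp (s 1))+2+1 = 3*(3 + opp (s 1))+3 := by omega
    rw [harr]
    exact adj_q2 s (by rw [h0]; rfl) B.b1 _ (V_z1 s) (by rw [h0]; rfl)
  | c =>
    refine ⟨3*(3 + zp (s 1)), by omega, ?_⟩
    exact adj_q1 s (by rw [h0]; rfl) B.b0 _ (V_z0 s) (by rw [h0]; rfl)
  | d =>
    refine ⟨3*(3 + opp (s 1)), by omega, ?_⟩
    exact adj_q1 s (by rw [h0]; rfl) B.b1 _ (V_z1 s) (by rw [h0]; rfl)
  | e =>
    refine ⟨3*(3 + opp (s 1))-1, by omega, ?_⟩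
    have harr : 3*(3 + opp (s 1))-1+1 = 3*(3 + opp (s 1)) := by omega
    rw [harr]
    exact adj_q0 s (by rw [h0]; rfl) B.b1 _ (by omega) (V_z1 s) (by rw [h0]; rfl)
  | f =>
    refine ⟨3*(3 + zp (s 1))-1, by omega, ?_⟩
    have harr : 3*(3 + zp (s 1))-1+1 = 3*(3 + zp (s 1)) := by omega
    rw [harr]
    exact adj_q0 s (by rw [h0]; rfl) B.b0 _ (by omega) (V_z0 s) (by rw [h0]; rfl)
/-! ### Period facts -/

lemma hasPeriod_length (w : List B) (hw : w ≠ []) : HasPeriod w w.length :=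
  ⟨List.length_pos_iff.mpr hw, fun i hi => absurd hi (by omega)⟩

lemma leastPeriod_mem (w : List B) (hw : w ≠ []) : HasPeriod w (leastPeriod w) := by
  have h : w.length ∈ {p | HasPeriod w p} := hasPeriod_length w hw
  exact Nat.sInf_mem ⟨w.length, h⟩

theorem stmt_8 (t : ℕ → A) :
    (∀ w : List B, w ≠ [] → FactorOf w (stewInf t) → expo w < 3) ∧
    (∀ ε : ℝ, 0 < ε →
      ∃ w : List B, w ≠ [] ∧ FactorOf w (stewInf t) ∧ 3 - ε < expo w) := by
  constructor
  · -- every factor has exponent < 3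
    intro w hw hfac
    have hmem := leastPeriod_mem w hw
    set P := leastPeriod w with hPdef
    have hP1 : 1 ≤ P := hmem.1
    by_contra hge
    push_neg at hge
    have h3P : 3 * P ≤ w.length := by
      have h1 : (3:ℝ) ≤ (w.length : ℝ) / (P:ℝ) := hge
      rw [le_div_iff₀ (by exact_mod_cast hP1 : (0:ℝ) < (P:ℝ))] at h1
      exact_mod_cast h1
    obtain ⟨i, hi⟩ := hfac
    apply noCube P hP1 t i
    intro k hk
    have h1 : k < w.length := by omega
    have h2 : k + P < w.length := by omega
    have harr : i + k + P = i + (k + P) := by omega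
    rw [← stewInf_eq, ← stewInf_eq, harr, ← hi k h1, ← hi (k+P) h2]
    exact hmem.2 k h2
  · -- factors of exponent close to 3
    intro ε hε
    obtain ⟨r, hr⟩ := exists_pow_lt_of_lt_one hε (by norm_num : (1:ℝ)/3 < 1)
    obtain ⟨m, hm1, hme⟩ := adjPair (fun k => t (k + r))
    set N := 3^r with hN
    have hNpos : 1 ≤ N := Nat.one_le_pow _ _ (by norm_num)
    have hPrlt : Pr t r < N := Pr_lt t r
    set nst := Pr t r + m * N with hnst
    have hmN : N ≤ m * N := Nat.le_mul_of_pos_left N hm1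
    have hnstN : N ≤ nst := by omega
    set i := nst + 1 - N with hidef
    set L := 3*N - 1 with hL
    set w := List.ofFn (fun j : Fin L => stewInf t (i + j)) with hwdef
    have hwlen : w.length = L := by rw [hwdef, List.length_ofFn]
    have hwne : w ≠ [] := by
      intro hnil
      rw [hnil] at hwlen
      simp at hwlen
      omega
    have hget : ∀ (j : ℕ), j < L → w.getD j B.bq = stewInf t (i + j) := by
      intro j hj
      rw [hwdef, List.getD_eq_getElem _ _ (by simpa using hj), List.getElem_ofFn]
    have hfac : FactorOf w (stewInf t) := by
      refine ⟨i, fun j hj => ?_⟩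
      rw [hwlen] at hj
      exact hget j hj
    have hper : HasPeriod w N := by
      refine ⟨hNpos, fun k hk => ?_⟩
      rw [hwlen] at hk
      rw [hget k (by omega), hget (k+N) (by omega), stewInf_eq, stewInf_eq]
      by_cases hknst : k = N - 1
      · subst hknst
        rw [show i + (N-1) = nst from by omega,
          show i + (N-1+N) = Pr t r + (m+1) * 3^r from by
            have hmul : (m+1) * N = m*N + N := by ring
            rw [hN] at hnst hnstN hmul ⊢
            omega]
        have e1 : V t nst = V (fun k => t (k+r)) m := by
          rw [hnst, hN]
          exact V_iter r t m
        rw [e1, V_iter r t (m+1)]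
        exact hme
      · have hmodne : (i + k) % N ≠ Pr t r := by
          intro hmod
          have hnmod : nst % N = Pr t r := by
            rw [hnst, Nat.add_mul_mod_self_right]
            exact Nat.mod_eq_of_lt hPrlt
          have hcong : (i + k) % N = (i + (N-1)) % N := by
            rw [hmod, ← hnmod]
            congr 1
            omega
          have hkmod : k % N = (N-1) % N := Nat.ModEq.add_left_cancel' i hcong
          rw [Nat.mod_eq_of_lt (by omega : N - 1 < N)] at hkmod
          by_cases hkN : k < N
          · rw [Nat.mod_eq_of_lt hkN] at hkmod
            omega
          · rw [Nat.mod_eq_sub_mod (by omega), Nat.mod_eq_of_lt (by omega)] at hkmod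
            omega
        have hgood := V_good t r (i+k) (n_mod_ne t r (i+k) (by rw [← hN]; exact hmodne))
        rw [show i + (k + N) = i + k + 3^r from by omega]
        exact hgood
    have hperle : leastPeriod w ≤ N := Nat.sInf_le hper
    have hperpos : 1 ≤ leastPeriod w := (leastPeriod_mem w hwne).1
    refine ⟨w, hwne, hfac, ?_⟩
    have hNR : ((N:ℕ):ℝ) = (3:ℝ)^r := by rw [hN]; push_cast; ring
    have hNRpos : (0:ℝ) < (N:ℝ) := by positivity
    have hLR : ((L:ℕ):ℝ) = 3*(N:ℝ) - 1 := by
      rw [hL, Nat.cast_sub (by omega)]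
      push_cast
      ring
    have hperR : (0:ℝ) < (leastPeriod w : ℝ) := by exact_mod_cast hperpos
    have hstep1 : (3:ℝ) - ε < (L:ℝ)/(N:ℝ) := by
      have h1N : (1:ℝ)/(N:ℝ) = ((1:ℝ)/3)^r := by
        rw [hNR, div_pow]
        norm_num
      have : (L:ℝ)/(N:ℝ) = 3 - 1/(N:ℝ) := by
        rw [hLR]
        field_simp
      rw [this, h1N]
      linarith
    have hstep2 : (L:ℝ)/(N:ℝ) ≤ (L:ℝ)/(leastPeriod w : ℝ) := by
      apply div_le_div_of_nonneg_left (by positivity) hperR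
      exact_mod_cast hperle
    rw [expo, hwlen]
    linarith
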